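/- (Validity of the one-bit Protocol 1.) Let p satisfy 1/2 + √3/4 ≤ p ≤ 1, let p₊, p₋ ≥ 0 with p₊ + p₋ = 1, let v₊, v₋ be unit vectors in ℝ³, let z = (0,0,1), and assume p₊·v₊ + p₋·v₋ = (2p−1)·z. Then for every unit vector λ in ℝ³, 0 ≤ ρ̃(λ) ≤ 1/(4π), where ρ̃(λ) := (1/π)[ p₊·Θ(λ·v₊) + p₋·Θ(λ·v₋) − (2p−1)·Θ(λ·z) ]; hence (4π)·ρ̃(λ) is a valid probability in [0,1]. -/

import Mathlib

/-!
Writing `Θ(x) = (x + |x|)/2`, the linear parts of `ρ̃(λ)` cancel because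
`p₊ v₊ + p₋ v₋ = (2p-1) z`, leaving `2π ρ̃(λ) = p₊|a| + p₋|b| - |p₊ a + p₋ b|` with `a = λ·v₊`,
`b = λ·v₋`. This is nonnegative by the triangle inequality, and its square is at most
`p₊ p₋ (a - b)² ≤ p₊ p₋ ‖v₊ - v₋‖² = 1 - (2p-1)² ≤ 1/4`.
-/

open MeasureTheory
open scoped RealInnerProductSpace

/-- `Θ(z) = z` for `z ≥ 0` and `0` otherwise. -/
noncomputable def Theta (z : ℝ) : ℝ := if 0 ≤ z then z else 0

/-- The vector `z = (0,0,1)` in `ℝ³`. -/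
noncomputable def zvec : EuclideanSpace ℝ (Fin 3) := EuclideanSpace.single 2 (1 : ℝ)

/-- The extra density `ρ̃(λ)`. -/
noncomputable def rhoTilde (p pP pM : ℝ) (vP vM lam : EuclideanSpace ℝ (Fin 3)) : ℝ :=
  (1 / Real.pi) *
    (pP * Theta ⟪lam, vP⟫ + pM * Theta ⟪lam, vM⟫ - (2 * p - 1) * Theta ⟪lam, zvec⟫)

lemma Theta_eq_add_abs_div_two (x : ℝ) : Theta x = (x + |x|) / 2 := by
  unfold Theta
  split_ifs with h
  · rw [abs_of_nonneg h]; ring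
  · rw [abs_of_neg (not_le.mp h)]; ring

lemma sq_abs_add_abs_sub_abs_add_le (x y : ℝ) :
    (|x| + |y| - |x + y|) ^ 2 ≤ 2 * (|x * y| - x * y) := by
  rw [abs_mul]
  rcases abs_cases x with ⟨hx, _⟩ | ⟨hx, _⟩ <;> rcases abs_cases y with ⟨hy, _⟩ | ⟨hy, _⟩ <;>
    rcases abs_cases (x + y) with ⟨hxy, _⟩ | ⟨hxy, _⟩ <;> rw [hx, hy, hxy] <;> nlinarith

lemma abs_mul_sub_mul_le (a b : ℝ) : |a * b| - a * b ≤ (a - b) ^ 2 / 2 := by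
  rcases abs_cases (a * b) with ⟨h, _⟩ | ⟨h, _⟩ <;> rw [h] <;> nlinarith [sq_nonneg (a + b)]

lemma sq_weighted_abs_sub_abs_add_le {pP pM : ℝ} (hpP : 0 ≤ pP) (hpM : 0 ≤ pM) (a b : ℝ) :
    (pP * |a| + pM * |b| - |pP * a + pM * b|) ^ 2 ≤ pP * pM * (a - b) ^ 2 := by
  have h := sq_abs_add_abs_sub_abs_add_le (pP * a) (pM * b)
  have hab := mul_le_mul_of_nonneg_left (abs_mul_sub_mul_le a b) (mul_nonneg hpP hpM)
  rw [abs_mul, abs_mul, abs_of_nonneg hpP, abs_of_nonneg hpM] at h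
  calc _ ≤ 2 * (|pP * a * (pM * b)| - pP * a * (pM * b)) := h
    _ = 2 * (pP * pM * (|a * b| - a * b)) := by
      rw [show pP * a * (pM * b) = pP * pM * (a * b) by ring, abs_mul,
        abs_of_nonneg (mul_nonneg hpP hpM)]
      ring
    _ ≤ pP * pM * (a - b) ^ 2 := by linarith

section InnerProductSpace

variable {E : Type*} [NormedAddCommGroup E] [InnerProductSpace ℝ E]

lemma norm_smul_add_smul_sq {pP pM : ℝ} (hsum : pP + pM = 1) (v w : E) :
    ‖pP • v + pM • w‖ ^ 2 = pP * ‖v‖ ^ 2 + pM * ‖w‖ ^ 2 - pP * pM * ‖v - w‖ ^ 2 := by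
  rw [norm_add_sq_real, norm_sub_sq_real, norm_smul, norm_smul, real_inner_smul_left,
    real_inner_smul_right, Real.norm_eq_abs, Real.norm_eq_abs, mul_pow, mul_pow, sq_abs, sq_abs]
  obtain rfl := eq_sub_of_add_eq hsum
  ring

lemma abs_inner_smul_add_smul_le {pP pM : ℝ} (hpP : 0 ≤ pP) (hpM : 0 ≤ pM) (l v w : E) :
    |⟪l, pP • v + pM • w⟫| ≤ pP * |⟪l, v⟫| + pM * |⟪l, w⟫| := by
  rw [inner_add_right, real_inner_smul_right, real_inner_smul_right]
  calc _ ≤ |pP * ⟪l, v⟫| + |pM * ⟪l, w⟫| := abs_add_le _ _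
    _ = _ := by rw [abs_mul, abs_mul, abs_of_nonneg hpP, abs_of_nonneg hpM]

lemma sq_abs_inner_sub_abs_inner_smul_add_smul_le {pP pM : ℝ} (hpP : 0 ≤ pP) (hpM : 0 ≤ pM)
    (hsum : pP + pM = 1) {v w : E} (hv : ‖v‖ = 1) (hw : ‖w‖ = 1) (l : E) :
    (pP * |⟪l, v⟫| + pM * |⟪l, w⟫| - |⟪l, pP • v + pM • w⟫|) ^ 2 ≤
      ‖l‖ ^ 2 * (1 - ‖pP • v + pM • w‖ ^ 2) := by
  have hdiff : (⟪l, v⟫ - ⟪l, w⟫) ^ 2 ≤ ‖l‖ ^ 2 * ‖v - w‖ ^ 2 := by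
    rw [← inner_sub_right, ← mul_pow, ← sq_abs]
    exact pow_le_pow_left₀ (abs_nonneg _) (abs_real_inner_le_norm _ _) 2
  have hcomb : 1 - ‖pP • v + pM • w‖ ^ 2 = pP * pM * ‖v - w‖ ^ 2 := by
    rw [norm_smul_add_smul_sq hsum, hv, hw]
    linear_combination -hsum
  rw [inner_add_right, real_inner_smul_right, real_inner_smul_right, hcomb]
  calc _ ≤ pP * pM * (⟪l, v⟫ - ⟪l, w⟫) ^ 2 := sq_weighted_abs_sub_abs_add_le hpP hpM _ _
    _ ≤ pP * pM * (‖l‖ ^ 2 * ‖v - w‖ ^ 2) :=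
      mul_le_mul_of_nonneg_left hdiff (mul_nonneg hpP hpM)
    _ = _ := by ring

end InnerProductSpace

lemma rhoTilde_eq {p pP pM : ℝ} (hp : 0 ≤ 2 * p - 1) {vP vM : EuclideanSpace ℝ (Fin 3)}
    (hcombo : pP • vP + pM • vM = (2 * p - 1) • zvec) (lam : EuclideanSpace ℝ (Fin 3)) :
    rhoTilde p pP pM vP vM lam =
      (pP * |⟪lam, vP⟫| + pM * |⟪lam, vM⟫| - |⟪lam, pP • vP + pM • vM⟫|) / (2 * Real.pi) := by
  have hlin := congrArg (fun v ↦ ⟪lam, v⟫) hcombo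
  simp only [inner_add_right, real_inner_smul_right] at hlin
  rw [hcombo, real_inner_smul_right, abs_mul, abs_of_nonneg hp, rhoTilde,
    Theta_eq_add_abs_div_two, Theta_eq_add_abs_div_two, Theta_eq_add_abs_div_two]
  field_simp
  linear_combination hlin

theorem one_bit_protocol_valid_general
    (p pP pM : ℝ) (hp : 1 / 2 + Real.sqrt 3 / 4 ≤ p)
    (hpP : 0 ≤ pP) (hpM : 0 ≤ pM) (hsum : pP + pM = 1)
    (vP vM : EuclideanSpace ℝ (Fin 3)) (hvP : ‖vP‖ = 1) (hvM : ‖vM‖ = 1)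
    (hcombo : pP • vP + pM • vM = (2 * p - 1) • zvec)
    (lam : EuclideanSpace ℝ (Fin 3)) (hlam : ‖lam‖ = 1) :
    0 ≤ rhoTilde p pP pM vP vM lam ∧ rhoTilde p pP pM vP vM lam ≤ 1 / (4 * Real.pi) := by
  have hs : Real.sqrt 3 / 2 ≤ 2 * p - 1 := by linarith
  have hs0 : 0 ≤ 2 * p - 1 := le_trans (by positivity) hs
  have hnorm : ‖pP • vP + pM • vM‖ ^ 2 = (2 * p - 1) ^ 2 := by
    simp [hcombo, norm_smul, zvec, abs_of_nonneg hs0]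
  have hs2 : 3 / 4 ≤ (2 * p - 1) ^ 2 := by
    nlinarith [Real.sq_sqrt (show (0 : ℝ) ≤ 3 by norm_num), Real.sqrt_nonneg 3]
  set D := pP * |⟪lam, vP⟫| + pM * |⟪lam, vM⟫| - |⟪lam, pP • vP + pM • vM⟫|
  have hD0 : 0 ≤ D := sub_nonneg.mpr (abs_inner_smul_add_smul_le hpP hpM lam vP vM)
  have hD2 : D ^ 2 ≤ 1 / 4 := by
    have := sq_abs_inner_sub_abs_inner_smul_add_smul_le hpP hpM hsum hvP hvM lam
    rw [hlam, hnorm] at this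
    linarith
  have hD : D ≤ 1 / 2 := by nlinarith
  rw [rhoTilde_eq hs0 hcombo]
  have hπ := Real.pi_pos
  constructor
  · positivity
  · rw [div_le_div_iff₀ (by positivity) (by positivity)]
    nlinarith

/-- Validity of the one-bit Protocol 1: for `1/2 + √3/4 ≤ p ≤ 1`,
`0 ≤ ρ̃(λ) ≤ 1/(4π)`, so `(4π)·ρ̃(λ)` is a valid probability. -/
theorem one_bit_protocol_valid
    (p pP pM : ℝ) (hp : 1 / 2 + Real.sqrt 3 / 4 ≤ p) (hp' : p ≤ 1)
    (hpP : 0 ≤ pP) (hpM : 0 ≤ pM) (hsum : pP + pM = 1)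
    (vP vM : EuclideanSpace ℝ (Fin 3)) (hvP : ‖vP‖ = 1) (hvM : ‖vM‖ = 1)
    (hcombo : pP • vP + pM • vM = (2 * p - 1) • zvec)
    (lam : EuclideanSpace ℝ (Fin 3)) (hlam : ‖lam‖ = 1) :
    0 ≤ rhoTilde p pP pM vP vM lam ∧ rhoTilde p pP pM vP vM lam ≤ 1 / (4 * Real.pi) :=
  one_bit_protocol_valid_general p pP pM hp hpP hpM hsum vP vM hvP hvM hcombo lam hlam
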